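/- arXiv:2508.08218 — 4 statements merged into one kernel-verified Lean document; each statement's English description precedes it below -/
import Mathlib

section
/- Let γ, μ, λ, β be real numbers with μ > 0, 0 < γμ < 1, 0 ≤ β ≤ λ, λ < γμ/(2(1-γμ)), and β > γλμ. Then α₁ = (1 + β - γμ(1+λ))² + (β - γλμ)(2 + β - γμ(1+λ)) satisfies 0 < α₁ < 1. -/
/-!
Write `x = γμ` and `d = β - γλμ`. Then `1 + β - γμ(1 + λ) = 1 - x + d`, so
`α₁ = (1 - x)² + (4 - 3x) d + 2d²`, which is increasing in `d ≥ 0` and equals `1` at `d = x / 2`.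
The hypotheses give `0 < d ≤ λ(1 - x) < x / 2`.
-/

lemma sq_add_mul_pos {x d : ℝ} (hx : x < 1) (hd : 0 ≤ d) :
    0 < (1 - x + d) ^ 2 + d * (2 - x + d) := by
  have hsq : 0 < (1 - x + d) ^ 2 := by positivity
  have hprod : 0 ≤ d * (2 - x + d) := mul_nonneg hd (by linarith)
  linarith

lemma sq_add_mul_lt_one {x d : ℝ} (hx : x < 1) (hd : 0 ≤ d) (hdx : d < x / 2) :
    (1 - x + d) ^ 2 + d * (2 - x + d) < 1 := by
  calc (1 - x + d) ^ 2 + d * (2 - x + d) = (1 - x) ^ 2 + (4 - 3 * x) * d + 2 * d ^ 2 := by ring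
    _ < (1 - x) ^ 2 + (4 - 3 * x) * (x / 2) + 2 * (x / 2) ^ 2 := by
        gcongr
        linarith
    _ = 1 := by ring

theorem stmt_1_general (γ μ lam β : ℝ) (hγμ1 : γ * μ < 1)
    (hbl : β ≤ lam) (hlub : lam < γ * μ / (2 * (1 - γ * μ)))
    (hβl : γ * lam * μ < β) :
    0 < (1 + β - γ * μ * (1 + lam)) ^ 2 +
        (β - γ * lam * μ) * (2 + β - γ * μ * (1 + lam)) ∧
      (1 + β - γ * μ * (1 + lam)) ^ 2 +
        (β - γ * lam * μ) * (2 + β - γ * μ * (1 + lam)) < 1 := by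
  have h1 : 1 + β - γ * μ * (1 + lam) = 1 - γ * μ + (β - γ * lam * μ) := by ring
  have h2 : 2 + β - γ * μ * (1 + lam) = 2 - γ * μ + (β - γ * lam * μ) := by ring
  rw [h1, h2]
  have hd : 0 ≤ β - γ * lam * μ := by linarith
  have hlam : lam * (1 - γ * μ) < γ * μ / 2 := by
    rw [lt_div_iff₀ (by linarith)] at hlub
    linarith
  have hdx : β - γ * lam * μ < γ * μ / 2 :=
    calc β - γ * lam * μ ≤ lam - γ * lam * μ := by linarith
      _ = lam * (1 - γ * μ) := by ring
      _ < γ * μ / 2 := hlam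
  exact ⟨sq_add_mul_pos hγμ1 hd, sq_add_mul_lt_one hγμ1 hd hdx⟩

theorem stmt_1 (γ μ lam β : ℝ) (hμ : 0 < μ) (hγμ0 : 0 < γ * μ) (hγμ1 : γ * μ < 1)
    (hβ0 : 0 ≤ β) (hbl : β ≤ lam) (hlub : lam < γ * μ / (2 * (1 - γ * μ)))
    (hβl : γ * lam * μ < β) :
    0 < (1 + β - γ * μ * (1 + lam)) ^ 2 +
        (β - γ * lam * μ) * (2 + β - γ * μ * (1 + lam)) ∧
      (1 + β - γ * μ * (1 + lam)) ^ 2 +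
        (β - γ * lam * μ) * (2 + β - γ * μ * (1 + lam)) < 1 :=
  stmt_1_general γ μ lam β hγμ1 hbl hlub hβl
end

section
/- Let γ, μ, λ, β be real numbers with μ > 0, 0 < γμ < 1, 0 ≤ λ ≤ β, and β < (1/2)γμ(1 + 2λ). Then α₁ = (1 + β - γμ(1+λ))² + (β - γλμ)(2 + β - γμ(1+λ)) satisfies 0 < α₁ < 1. -/
/-! With `g = γμ` and `b = β - γλμ` the base `1 + β - γμ(1+λ)` is `1 + b - g`, so `α₁` depends on
`g` and `b` only. Then `α₁ ≥ (1 + b - g)² > 0` as soon as `b ≥ 0` and `g < 1`, and the identity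
`1 - α₁ = (2 + b - g)(g - 2b)` gives `α₁ < 1` once the step-size condition `2b < g` holds. -/

def momentumRate (g b : ℝ) : ℝ :=
  (1 + b - g) ^ 2 + b * (2 + b - g)

section momentumRate

variable {g b : ℝ}

theorem one_sub_momentumRate : 1 - momentumRate g b = (2 + b - g) * (g - 2 * b) := by
  unfold momentumRate
  ring

theorem momentumRate_pos (hb : 0 ≤ b) (hg : g < 1) : 0 < momentumRate g b := by
  have hbase : 0 < 1 + b - g := by linarith
  unfold momentumRate
  have : 0 ≤ b * (2 + b - g) := mul_nonneg hb (by linarith)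
  positivity

theorem momentumRate_lt_one (hb : 0 ≤ b) (hg : g < 1) (hbg : 2 * b < g) :
    momentumRate g b < 1 := by
  have hprod : 0 < (2 + b - g) * (g - 2 * b) := mul_pos (by linarith) (by linarith)
  linarith [one_sub_momentumRate (g := g) (b := b)]

end momentumRate

theorem stmt_3_general (γ μ lam β : ℝ) (hγμ1 : γ * μ < 1)
    (hl0 : 0 ≤ lam) (hlb : lam ≤ β) (hβub : β < (1 / 2) * γ * μ * (1 + 2 * lam)) :
    0 < (1 + β - γ * μ * (1 + lam)) ^ 2 +
        (β - γ * lam * μ) * (2 + β - γ * μ * (1 + lam)) ∧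
      (1 + β - γ * μ * (1 + lam)) ^ 2 +
        (β - γ * lam * μ) * (2 + β - γ * μ * (1 + lam)) < 1 := by
  have hb : 0 ≤ β - γ * lam * μ := by
    linarith [mul_nonneg hl0 (sub_nonneg.2 hγμ1.le)]
  have hbg : 2 * (β - γ * lam * μ) < γ * μ := by linarith
  have hrate : (1 + β - γ * μ * (1 + lam)) ^ 2 + (β - γ * lam * μ) * (2 + β - γ * μ * (1 + lam))
      = momentumRate (γ * μ) (β - γ * lam * μ) := by
    unfold momentumRate
    ring
  rw [hrate]
  exact ⟨momentumRate_pos hb hγμ1, momentumRate_lt_one hb hγμ1 hbg⟩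

theorem stmt_3 (γ μ lam β : ℝ) (hμ : 0 < μ) (hγμ0 : 0 < γ * μ) (hγμ1 : γ * μ < 1)
    (hl0 : 0 ≤ lam) (hlb : lam ≤ β) (hβub : β < (1 / 2) * γ * μ * (1 + 2 * lam)) :
    0 < (1 + β - γ * μ * (1 + lam)) ^ 2 +
        (β - γ * lam * μ) * (2 + β - γ * μ * (1 + lam)) ∧
      (1 + β - γ * μ * (1 + lam)) ^ 2 +
        (β - γ * lam * μ) * (2 + β - γ * μ * (1 + lam)) < 1 :=
  stmt_3_general γ μ lam β hγμ1 hl0 hlb hβub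
end

section
/- Let f : ℝⁿ → ℝ be twice continuously differentiable with Hessian H, and suppose H is μ-diagonally dominant on a convex set 𝒳 (H_ii ≥ μ + Σ_{j≠i}|H_ij| pointwise) with μ > 0, and suppose γ, λ, β > 0 satisfy for all relevant points w: 1 − γ(1+λ)H_ii(w) + β ≥ 0 and γλH_ii(w) − β ≤ 0. Define u_i(x,y) = x_i − γ∇_i f(x + λ(x−y)) + β(x_i − y_i). Then for all (x,y), (x',y') with all evaluation points in 𝒳: |u_i(x,y) − u_i(x',y')| ≤ (1 + β − γμ(1+λ))‖x − x'‖∞ + (β − γλμ)‖y − y'‖∞. -/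
/-!
Fix a coordinate `i` and move `(x', y')` to `(x, y)` along a straight line. The evaluation point
`x + λ(x - y)` then runs along the segment between two points of the convex set `𝒳`, so the mean
value inequality reduces the claim to a bound on the derivative along the line. That derivative is
a linear form `∑ⱼ pⱼ aⱼ - ∑ⱼ qⱼ bⱼ` in `a = x - x'`, `b = y - y'`, bounded by
`(∑ⱼ |pⱼ|) ‖a‖∞ + (∑ⱼ |qⱼ|) ‖b‖∞`. The sign conditions make the diagonal entries of `p` and `q`
nonnegative, and diagonal dominance turns the row sums into `1 + β - γμ(1 + λ)` and `β - γλμ`.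
-/

open Finset AffineMap

section MomentumStep

variable {ι : Type*} [Fintype ι]

/-- The paper's `uᵢ`, with `g` in the role of the partial derivative `∇ᵢ f`; the Hessian row `Hᵢⱼ`
is then `fderiv ℝ g w (Pi.single j 1)`. -/
def momentumStep (g : (ι → ℝ) → ℝ) (γ lam β : ℝ) (x y : ι → ℝ) (i : ι) : ℝ :=
  x i - γ * g (x + lam • (x - y)) + β * (x i - y i)

theorem abs_sum_mul_le_sum_abs_mul_norm (p a : ι → ℝ) :
    |∑ j, p j * a j| ≤ (∑ j, |p j|) * ‖a‖ :=
  calc |∑ j, p j * a j| ≤ ∑ j, |p j * a j| := abs_sum_le_sum_abs _ _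
    _ ≤ ∑ j, |p j| * ‖a‖ := sum_le_sum fun j _ => by
        rw [abs_mul]
        gcongr
        exact norm_le_pi_norm a j
    _ = (∑ j, |p j|) * ‖a‖ := (sum_mul ..).symm

theorem HasDerivAt.momentumStep {g : (ι → ℝ) → ℝ} {x y : ℝ → ι → ℝ} {a b : ι → ℝ} {t γ lam β : ℝ}
    (hg : DifferentiableAt ℝ g (x t + lam • (x t - y t))) (hx : HasDerivAt x a t)
    (hy : HasDerivAt y b t) (i : ι) :
    HasDerivAt (fun s => momentumStep g γ lam β (x s) (y s) i)
      (a i - γ * fderiv ℝ g (x t + lam • (x t - y t)) (a + lam • (a - b)) + β * (a i - b i)) t := by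
  have hz := hg.hasFDerivAt.comp_hasDerivAt t (hx.add ((hx.sub hy).const_smul lam))
  have hxi := hasDerivAt_pi.1 hx i
  exact (hxi.sub (hz.const_mul γ)).add ((hxi.sub (hasDerivAt_pi.1 hy i)).const_mul β)

variable [DecidableEq ι]

theorem sum_single_sub_mul_mul (i : ι) (c κ : ℝ) (h a : ι → ℝ) :
    ∑ j, ((Pi.single i c : ι → ℝ) j - κ * h j) * a j = c * a i - κ * ∑ j, h j * a j := by
  simp [sub_mul, sum_sub_distrib, mul_sum, mul_assoc, Pi.single_apply]

theorem sum_abs_single_sub_mul_le {h : ι → ℝ} {i : ι} {c κ μ : ℝ} (hκ : 0 ≤ κ)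
    (hdiag : 0 ≤ c - κ * h i) (hdom : μ + ∑ j ∈ univ.erase i, |h j| ≤ h i) :
    ∑ j, |(Pi.single i c : ι → ℝ) j - κ * h j| ≤ c - κ * μ := by
  have hoff : ∑ j ∈ univ.erase i, |(Pi.single i c : ι → ℝ) j - κ * h j| =
      κ * ∑ j ∈ univ.erase i, |h j| := by
    rw [mul_sum]
    refine sum_congr rfl fun j hj => ?_
    rw [Pi.single_eq_of_ne (ne_of_mem_erase hj), zero_sub, abs_neg, abs_mul, abs_of_nonneg hκ]
  rw [← add_sum_erase _ _ (mem_univ i), Pi.single_eq_same, abs_of_nonneg hdiag, hoff]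
  nlinarith

theorem abs_momentumStep_deriv_le {h : ι → ℝ} {i : ι} {μ γ lam β : ℝ} (hγ : 0 ≤ γ) (hl : 0 ≤ lam)
    (hdom : μ + ∑ j ∈ univ.erase i, |h j| ≤ h i)
    (hx : 0 ≤ 1 - γ * (1 + lam) * h i + β) (hy : γ * lam * h i - β ≤ 0) (a b : ι → ℝ) :
    |a i - γ * ∑ j, (a + lam • (a - b)) j * h j + β * (a i - b i)| ≤
      (1 + β - γ * μ * (1 + lam)) * ‖a‖ + (β - γ * lam * μ) * ‖b‖ := by
  have hsum : ∑ j, (a + lam • (a - b)) j * h j =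
      (1 + lam) * ∑ j, h j * a j - lam * ∑ j, h j * b j := by
    rw [mul_sum, mul_sum, ← sum_sub_distrib]
    refine sum_congr rfl fun j _ => ?_
    simp only [Pi.add_apply, Pi.smul_apply, Pi.sub_apply, smul_eq_mul]
    ring
  have hsplit : a i - γ * ∑ j, (a + lam • (a - b)) j * h j + β * (a i - b i) =
      ∑ j, ((Pi.single i (1 + β) : ι → ℝ) j - γ * (1 + lam) * h j) * a j -
        ∑ j, ((Pi.single i β : ι → ℝ) j - γ * lam * h j) * b j := by
    rw [sum_single_sub_mul_mul, sum_single_sub_mul_mul, hsum]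
    ring
  have hp := sum_abs_single_sub_mul_le (c := 1 + β) (by positivity : 0 ≤ γ * (1 + lam))
    (by linarith) hdom
  have hq := sum_abs_single_sub_mul_le (c := β) (mul_nonneg hγ hl) (by linarith) hdom
  rw [hsplit]
  calc _ ≤ _ := abs_sub _ _
    _ ≤ (∑ j, |(Pi.single i (1 + β) : ι → ℝ) j - γ * (1 + lam) * h j|) * ‖a‖ +
          (∑ j, |(Pi.single i β : ι → ℝ) j - γ * lam * h j|) * ‖b‖ :=
        add_le_add (abs_sum_mul_le_sum_abs_mul_norm _ _) (abs_sum_mul_le_sum_abs_mul_norm _ _)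
    _ ≤ _ := by
        gcongr
        linarith

theorem abs_momentumStep_sub_le {g : (ι → ℝ) → ℝ} (hg : Differentiable ℝ g) {X : Set (ι → ℝ)}
    (hX : Convex ℝ X) {i : ι} {μ γ lam β : ℝ} (hγ : 0 ≤ γ) (hl : 0 ≤ lam)
    (hdom : ∀ w ∈ X,
      μ + ∑ j ∈ univ.erase i, |fderiv ℝ g w (Pi.single j 1)| ≤ fderiv ℝ g w (Pi.single i 1))
    (hsign : ∀ w ∈ X, 0 ≤ 1 - γ * (1 + lam) * fderiv ℝ g w (Pi.single i 1) + β ∧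
      γ * lam * fderiv ℝ g w (Pi.single i 1) - β ≤ 0)
    {x y x' y' : ι → ℝ} (hz : x + lam • (x - y) ∈ X) (hz' : x' + lam • (x' - y') ∈ X) :
    |momentumStep g γ lam β x y i - momentumStep g γ lam β x' y' i| ≤
      (1 + β - γ * μ * (1 + lam)) * ‖x - x'‖ + (β - γ * lam * μ) * ‖y - y'‖ := by
  set w : ℝ → ι → ℝ := fun t => lineMap x' x t + lam • (lineMap x' x t - lineMap y' y t)
  have hw : ∀ t ∈ Set.Icc (0 : ℝ) 1, w t ∈ X := fun t ht => by
    convert hX.lineMap_mem hz' hz ht using 1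
    simp only [w, lineMap_apply_module]
    module
  have hderiv (t : ℝ) :=
    HasDerivAt.momentumStep (γ := γ) (β := β) (hg (w t)) hasDerivAt_lineMap hasDerivAt_lineMap i
  have hrow (v : ι → ℝ) (t : ℝ) :
      fderiv ℝ g (w t) v = ∑ j, v j * fderiv ℝ g (w t) (Pi.single j 1) := by
    conv_lhs => rw [pi_eq_sum_univ' v, map_sum]
    simp
  simpa using norm_image_sub_le_of_norm_deriv_le_segment_01'
    (fun t _ => (hderiv t).hasDerivWithinAt) fun t ht => by
      have ht' := Set.Ico_subset_Icc_self ht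
      rw [Real.norm_eq_abs, hrow]
      exact abs_momentumStep_deriv_le hγ hl (hdom _ (hw t ht')) (hsign _ (hw t ht')).1
        (hsign _ (hw t ht')).2 _ _

end MomentumStep

theorem stmt_15_general {n : ℕ} (f : (Fin n → ℝ) → ℝ) (hf : ContDiff ℝ 2 f)
    (X : Set (Fin n → ℝ)) (hX : Convex ℝ X)
    (μ γ lam β : ℝ) (hγ : 0 < γ) (hl : 0 < lam)
    (H : (Fin n → ℝ) → Fin n → Fin n → ℝ)
    (hH : ∀ x k j, H x k j =
      fderiv ℝ (fun y => fderiv ℝ f y (Pi.single k 1)) x (Pi.single j 1))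
    (hdom : ∀ x ∈ X, ∀ i, μ + ∑ j ∈ Finset.univ.erase i, |H x i j| ≤ H x i i)
    (hsign : ∀ w ∈ X, ∀ i,
      0 ≤ 1 - γ * (1 + lam) * H w i i + β ∧ γ * lam * H w i i - β ≤ 0)
    (u : (Fin n → ℝ) → (Fin n → ℝ) → Fin n → ℝ)
    (hu : ∀ x y i, u x y i =
      x i - γ * fderiv ℝ f (x + lam • (x - y)) (Pi.single i 1) + β * (x i - y i)) :
    ∀ x y x' y' : Fin n → ℝ,
      x + lam • (x - y) ∈ X → x' + lam • (x' - y') ∈ X →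
      ∀ i, |u x y i - u x' y' i| ≤
        (1 + β - γ * μ * (1 + lam)) * ‖x - x'‖ + (β - γ * lam * μ) * ‖y - y'‖ := by
  intro x y x' y' hz hz' i
  have hg : Differentiable ℝ fun w => fderiv ℝ f w (Pi.single i 1) :=
    ((hf.fderiv_right le_rfl).clm_apply contDiff_const).differentiable one_ne_zero
  simp only [hH] at hdom hsign
  rw [hu, hu]
  exact abs_momentumStep_sub_le hg hX hγ.le hl.le (fun w hw => hdom w hw i)
    (fun w hw => hsign w hw i) hz hz'

theorem stmt_15 {n : ℕ} (f : (Fin n → ℝ) → ℝ) (hf : ContDiff ℝ 2 f)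
    (X : Set (Fin n → ℝ)) (hX : Convex ℝ X)
    (μ γ lam β : ℝ) (hμ : 0 < μ) (hγ : 0 < γ) (hl : 0 < lam) (hβ : 0 < β)
    (H : (Fin n → ℝ) → Fin n → Fin n → ℝ)
    (hH : ∀ x k j, H x k j =
      fderiv ℝ (fun y => fderiv ℝ f y (Pi.single k 1)) x (Pi.single j 1))
    (hdom : ∀ x ∈ X, ∀ i, μ + ∑ j ∈ Finset.univ.erase i, |H x i j| ≤ H x i i)
    (hsign : ∀ w ∈ X, ∀ i,
      0 ≤ 1 - γ * (1 + lam) * H w i i + β ∧ γ * lam * H w i i - β ≤ 0)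
    (u : (Fin n → ℝ) → (Fin n → ℝ) → Fin n → ℝ)
    (hu : ∀ x y i, u x y i =
      x i - γ * fderiv ℝ f (x + lam • (x - y)) (Pi.single i 1) + β * (x i - y i)) :
    ∀ x y x' y' : Fin n → ℝ,
      x + lam • (x - y) ∈ X → x' + lam • (x' - y') ∈ X →
      ∀ i, |u x y i - u x' y' i| ≤
        (1 + β - γ * μ * (1 + lam)) * ‖x - x'‖ + (β - γ * lam * μ) * ‖y - y'‖ :=
  stmt_15_general f hf X hX μ γ lam β hγ hl H hH hdom hsign u hu
end

section
/- Let h : ℝⁿ → ℝⁿ be a map with fixed point z* that is an α-contraction in the ∞-norm with α ∈ (0,1), and suppose h is 'block-diagonal compatible': h(z)_i depends only on z. Consider an asynchronous iteration where at each step k an arbitrary nonempty subset S(k) ⊆ {1,…,n} of coordinates is updated via z_i(k+1) = h(ẑⁱ(k))_i for i ∈ S(k), using possibly outdated information ẑⁱ(k) whose components all lie in a set 𝒵(m) = {v : ‖v − z*‖∞ ≤ αᵐ‖z(0) − z*‖∞}. Then the updated coordinate satisfies |z_i(k+1) − z*_i| ≤ α^{m+1}‖z(0) − z*‖∞, i.e.,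 it lies in the i-th coordinate projection of 𝒵(m+1); moreover coordinates not updated remain in their current set. Hence each set 𝒵(m) is forward invariant under asynchronous updates once all local states enter it. -/
lemma abs_apply_sub_le_of_norm_sub_le {ι : Type*} [Fintype ι] {x y : ι → ℝ} {r : ℝ}
    (hxy : ‖x - y‖ ≤ r) (i : ι) : |x i - y i| ≤ r :=
  (norm_le_pi_norm (x - y) i).trans hxy

lemma abs_apply_sub_le_of_contraction {ι : Type*} [Fintype ι] {h : (ι → ℝ) → ι → ℝ}
    {zstar x : ι → ℝ} {α r : ℝ} (hα : 0 ≤ α)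
    (hcontr : ∀ z, ‖h z - zstar‖ ≤ α * ‖z - zstar‖) (hx : ‖x - zstar‖ ≤ r) (i : ι) :
    |h x i - zstar i| ≤ α * r :=
  abs_apply_sub_le_of_norm_sub_le ((hcontr x).trans (mul_le_mul_of_nonneg_left hx hα)) i

open Classical in

theorem stmt_16_general {n : ℕ} (h : (Fin n → ℝ) → (Fin n → ℝ))
    (zstar z0 : Fin n → ℝ) (α : ℝ) (hα : α ∈ Set.Ioo (0 : ℝ) 1)
    (hcontr : ∀ z, ‖h z - zstar‖ ≤ α * ‖z - zstar‖)
    (m : ℕ) (S : Set (Fin n))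
    (zhat : Fin n → (Fin n → ℝ))
    (hzhat : ∀ i, ‖zhat i - zstar‖ ≤ α ^ m * ‖z0 - zstar‖)
    (z : Fin n → ℝ) (hz : ‖z - zstar‖ ≤ α ^ m * ‖z0 - zstar‖)
    (z' : Fin n → ℝ)
    (hz' : ∀ i, z' i = if i ∈ S then h (zhat i) i else z i) :
    (∀ i ∈ S, |z' i - zstar i| ≤ α ^ (m + 1) * ‖z0 - zstar‖) ∧
      (∀ i ∉ S, |z' i - zstar i| ≤ α ^ m * ‖z0 - zstar‖) ∧
      ‖z' - zstar‖ ≤ α ^ m * ‖z0 - zstar‖ := by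
  set r := α ^ m * ‖z0 - zstar‖
  have hr : 0 ≤ r := (norm_nonneg _).trans hz
  have updated : ∀ i ∈ S, |z' i - zstar i| ≤ α * r := fun i hi => by
    rw [hz' i, if_pos hi]
    exact abs_apply_sub_le_of_contraction hα.1.le hcontr (hzhat i) i
  have kept : ∀ i ∉ S, |z' i - zstar i| ≤ r := fun i hi => by
    rw [hz' i, if_neg hi]
    exact abs_apply_sub_le_of_norm_sub_le hz i
  refine ⟨by simpa only [pow_succ', mul_assoc] using updated, kept,
    (pi_norm_le_iff_of_nonneg hr).mpr fun i => ?_⟩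
  rw [Pi.sub_apply, Real.norm_eq_abs]
  by_cases hi : i ∈ S
  · exact (updated i hi).trans (mul_le_of_le_one_left hr hα.2.le)
  · exact kept i hi

open Classical in
theorem stmt_16 {n : ℕ} (h : (Fin n → ℝ) → (Fin n → ℝ))
    (zstar z0 : Fin n → ℝ) (α : ℝ) (hα : α ∈ Set.Ioo (0 : ℝ) 1)
    (hfix : h zstar = zstar)
    (hcontr : ∀ z, ‖h z - zstar‖ ≤ α * ‖z - zstar‖)
    (m : ℕ) (S : Set (Fin n)) (hS : S.Nonempty)
    (zhat : Fin n → (Fin n → ℝ))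
    (hzhat : ∀ i, ‖zhat i - zstar‖ ≤ α ^ m * ‖z0 - zstar‖)
    (z : Fin n → ℝ) (hz : ‖z - zstar‖ ≤ α ^ m * ‖z0 - zstar‖)
    (z' : Fin n → ℝ)
    (hz' : ∀ i, z' i = if i ∈ S then h (zhat i) i else z i) :
    (∀ i ∈ S, |z' i - zstar i| ≤ α ^ (m + 1) * ‖z0 - zstar‖) ∧
      (∀ i ∉ S, |z' i - zstar i| ≤ α ^ m * ‖z0 - zstar‖) ∧
      ‖z' - zstar‖ ≤ α ^ m * ‖z0 - zstar‖ :=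
  stmt_16_general h zstar z0 α hα hcontr m S zhat hzhat z hz z' hz'
end
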